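/- With V_t defined by the dynamic programming recursion over a finite horizon, V_t(F) ≥ V_{t+1}(F) for all F ∈ [0,1] and all t = 0,…,T-2. That is, the profit-to-go function is pointwise nonincreasing in t. -/

import Mathlib

/-! Write `B W F = sup_{π ≥ 0} [H(F,π) + W(F⁺(F,π))]`, so that `V_{T-1} = B 0` and
`V_t = B V_{t+1}`. On `[0,1]` the map `F ↦ F⁺` stays in `[0,1]`, `H ≤ e^{p+q}` and `H(F,C) = 0`;
hence `B` sends nonnegative functions bounded on `[0,1]` to such functions, and it is monotone.
So every `V_t` is nonnegative, which gives `V_{T-1} = B 0 ≤ B V_{T-1} = V_{T-2}`, and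
`V_{t+2} ≤ V_{t+1}` propagates to `V_{t+1} = B V_{t+2} ≤ B V_{t+1} = V_t`. -/

noncomputable section

def R (p q F π : ℝ) : ℝ := Real.exp (p + q * F - π) / (1 + Real.exp (p + q * F - π))

def H (C p q F π : ℝ) : ℝ := (π - C) * (1 - F) * R p q F π

def Fplus (p q F π : ℝ) : ℝ := F + (1 - F) * R p q F π

open Set

lemma R_nonneg (p q F π : ℝ) : 0 ≤ R p q F π := by
  unfold R; positivity

lemma R_le_exp (p q F π : ℝ) : R p q F π ≤ Real.exp (p + q * F - π) :=
  div_le_self (Real.exp_pos _).le (by linarith [Real.exp_pos (p + q * F - π)])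

lemma R_le_one (p q F π : ℝ) : R p q F π ≤ 1 := by
  rw [R, div_le_one (by positivity)]
  linarith

lemma Fplus_mem_Icc (p q : ℝ) {F : ℝ} (hF : F ∈ Icc (0 : ℝ) 1) (π : ℝ) :
    Fplus p q F π ∈ Icc (0 : ℝ) 1 := by
  obtain ⟨h0, h1⟩ := hF
  have := R_nonneg p q F π
  have := R_le_one p q F π
  constructor <;> unfold Fplus <;> nlinarith

@[simp]
lemma H_self (C p q F : ℝ) : H C p q F C = 0 := by
  simp [H]

lemma mul_exp_neg_le_one (x : ℝ) : x * Real.exp (-x) ≤ 1 := by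
  rw [Real.exp_neg, ← div_eq_mul_inv, div_le_one (Real.exp_pos x)]
  linarith [Real.add_one_le_exp x]

lemma H_le_exp {C q : ℝ} (p : ℝ) (hC : 0 ≤ C) (hq : 0 ≤ q) {F : ℝ} (hF : F ∈ Icc (0 : ℝ) 1)
    {π : ℝ} (hπ : 0 ≤ π) : H C p q F π ≤ Real.exp (p + q) := by
  obtain ⟨h0, h1⟩ := hF
  have hR := R_nonneg p q F π
  rcases le_or_gt π C with hπC | hπC
  · have : H C p q F π ≤ 0 :=
      mul_nonpos_of_nonpos_of_nonneg
        (mul_nonpos_of_nonpos_of_nonneg (by linarith) (by linarith)) hR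
    exact this.trans (Real.exp_pos _).le
  · calc H C p q F π ≤ π * R p q F π := by
          unfold H
          exact mul_le_mul_of_nonneg_right (by nlinarith) hR
      _ ≤ π * Real.exp (p + q * F - π) := mul_le_mul_of_nonneg_left (R_le_exp p q F π) hπ
      _ = Real.exp (p + q * F) * (π * Real.exp (-π)) := by
          rw [sub_eq_add_neg, Real.exp_add]; ring
      _ ≤ Real.exp (p + q * F) * 1 :=
          mul_le_mul_of_nonneg_left (mul_exp_neg_le_one π) (Real.exp_pos _).le
      _ ≤ Real.exp (p + q) := by
          rw [mul_one, Real.exp_le_exp]; nlinarith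

def bellman (C p q : ℝ) (W : ℝ → ℝ) (F : ℝ) : ℝ :=
  sSup ((fun π => H C p q F π + W (Fplus p q F π)) '' Ici 0)

section Bellman

variable {C p q : ℝ} (hC : 0 ≤ C) (hq : 0 ≤ q)
include hC hq

lemma bddAbove_bellman_image {W : ℝ → ℝ} {M : ℝ} (hW : ∀ F ∈ Icc (0 : ℝ) 1, W F ≤ M)
    {F : ℝ} (hF : F ∈ Icc (0 : ℝ) 1) :
    BddAbove ((fun π => H C p q F π + W (Fplus p q F π)) '' Ici 0) := by
  refine ⟨Real.exp (p + q) + M, ?_⟩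
  rintro _ ⟨π, hπ, rfl⟩
  exact add_le_add (H_le_exp p hC hq hF hπ) (hW _ (Fplus_mem_Icc p q hF π))

lemma bellman_le {W : ℝ → ℝ} {M : ℝ} (hW : ∀ F ∈ Icc (0 : ℝ) 1, W F ≤ M)
    {F : ℝ} (hF : F ∈ Icc (0 : ℝ) 1) : bellman C p q W F ≤ Real.exp (p + q) + M := by
  refine csSup_le (nonempty_Ici.image _) ?_
  rintro _ ⟨π, hπ, rfl⟩
  exact add_le_add (H_le_exp p hC hq hF hπ) (hW _ (Fplus_mem_Icc p q hF π))

lemma bellman_nonneg {W : ℝ → ℝ} {M : ℝ} (hW₀ : ∀ F ∈ Icc (0 : ℝ) 1, 0 ≤ W F)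
    (hW : ∀ F ∈ Icc (0 : ℝ) 1, W F ≤ M) {F : ℝ} (hF : F ∈ Icc (0 : ℝ) 1) :
    0 ≤ bellman C p q W F := by
  have hle : H C p q F C + W (Fplus p q F C) ≤ bellman C p q W F :=
    le_csSup (bddAbove_bellman_image hC hq hW hF) (mem_image_of_mem _ (mem_Ici.2 hC))
  rw [H_self, zero_add] at hle
  exact (hW₀ _ (Fplus_mem_Icc p q hF C)).trans hle

lemma bellman_mono {W₁ W₂ : ℝ → ℝ} {M : ℝ} (hle : ∀ F ∈ Icc (0 : ℝ) 1, W₁ F ≤ W₂ F)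
    (hW₂ : ∀ F ∈ Icc (0 : ℝ) 1, W₂ F ≤ M) {F : ℝ} (hF : F ∈ Icc (0 : ℝ) 1) :
    bellman C p q W₁ F ≤ bellman C p q W₂ F := by
  refine csSup_le (nonempty_Ici.image _) ?_
  rintro _ ⟨π, hπ, rfl⟩
  refine le_csSup_of_le (bddAbove_bellman_image hC hq hW₂ hF) ⟨π, hπ, rfl⟩ ?_
  exact add_le_add_right (hle _ (Fplus_mem_Icc p q hF π)) _

variable {V : ℕ → ℝ → ℝ} {N : ℕ} (hlast : V N = bellman C p q 0)
  (hrec : ∀ t < N, V t = bellman C p q (V (t + 1)))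
include hlast hrec

lemma bellman_iterate_nonneg_bdd {t : ℕ} (ht : t ≤ N) :
    (∀ F ∈ Icc (0 : ℝ) 1, 0 ≤ V t F) ∧ ∃ M, ∀ F ∈ Icc (0 : ℝ) 1, V t F ≤ M := by
  induction ht using Nat.decreasingInduction with
  | self =>
    have h0 : ∀ F ∈ Icc (0 : ℝ) 1, (0 : ℝ → ℝ) F ≤ 0 := fun _ _ => le_rfl
    rw [hlast]
    exact ⟨fun F hF => bellman_nonneg hC hq (fun _ _ => le_rfl) h0 hF,
      _, fun F hF => bellman_le hC hq h0 hF⟩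
  | of_succ k hk ih =>
    obtain ⟨hnonneg, M, hM⟩ := ih
    rw [hrec k hk]
    exact ⟨fun F hF => bellman_nonneg hC hq hnonneg hM hF, _, fun F hF => bellman_le hC hq hM hF⟩

lemma bellman_iterate_succ_le {t : ℕ} (ht : t < N) {F : ℝ} (hF : F ∈ Icc (0 : ℝ) 1) :
    V (t + 1) F ≤ V t F := by
  obtain ⟨M, rfl⟩ : ∃ M, N = M + 1 := ⟨N - 1, by omega⟩
  replace ht := Nat.le_of_lt_succ ht
  induction ht using Nat.decreasingInduction generalizing F with
  | self =>
    obtain ⟨hnonneg, B, hB⟩ := bellman_iterate_nonneg_bdd hC hq hlast hrec le_rfl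
    rw [hrec M M.lt_succ_self, congrFun hlast F]
    exact bellman_mono (W₁ := 0) hC hq hnonneg hB hF
  | of_succ k hk ih =>
    obtain ⟨-, B, hB⟩ := bellman_iterate_nonneg_bdd hC hq hlast hrec (Nat.le_succ_of_le hk)
    rw [hrec k (by omega), congrFun (hrec (k + 1) (by omega)) F]
    exact bellman_mono hC hq (fun _ hF' => ih hF') hB hF

end Bellman

theorem stmt_12_general (C p q : ℝ) (hC : 0 ≤ C) (hq : 0 ≤ q)
    (T : ℕ) (V : ℕ → ℝ → ℝ)
    (hlast : ∀ F : ℝ, V (T - 1) F = sSup ((fun π => H C p q F π) '' Set.Ici (0:ℝ)))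
    (hrec : ∀ t : ℕ, t < T - 1 → ∀ F : ℝ,
      V t F = sSup ((fun π => H C p q F π + V (t + 1) (Fplus p q F π)) '' Set.Ici (0:ℝ))) :
    ∀ t : ℕ, t < T - 1 → ∀ F ∈ Set.Icc (0:ℝ) 1, V (t + 1) F ≤ V t F := by
  have hlast' : V (T - 1) = bellman C p q 0 := funext fun F => by
    simp only [bellman, hlast, Pi.zero_apply, add_zero]
  have hrec' : ∀ t < T - 1, V t = bellman C p q (V (t + 1)) := fun t ht => funext (hrec t ht)
  exact fun t ht F hF => bellman_iterate_succ_le hC hq hlast' hrec' ht hF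

/-- The profit-to-go functions of the dynamic program are pointwise nonincreasing in
time: `V t F ≥ V (t+1) F` for `t = 0,…,T-2` and `F ∈ [0,1]`. -/
theorem stmt_12 (C p q : ℝ) (hC : 0 ≤ C) (hq : 0 ≤ q)
    (T : ℕ) (hT : 2 ≤ T) (V : ℕ → ℝ → ℝ)
    (hlast : ∀ F : ℝ, V (T - 1) F = sSup ((fun π => H C p q F π) '' Set.Ici (0:ℝ)))
    (hrec : ∀ t : ℕ, t < T - 1 → ∀ F : ℝ,
      V t F = sSup ((fun π => H C p q F π + V (t + 1) (Fplus p q F π)) '' Set.Ici (0:ℝ))) :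
    ∀ t : ℕ, t < T - 1 → ∀ F ∈ Set.Icc (0:ℝ) 1, V (t + 1) F ≤ V t F :=
  stmt_12_general C p q hC hq T V hlast hrec
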